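/- Let U = U(λ) be the first Weyl algebra module with basis {e_n : n ∈ ℤ}, x·e_n = e_{n+1}, ∂·e_n = (λ+n)e_{n-1}, for λ ∈ ℂ \ ℤ. Then for λ, μ ∈ ℂ \ ℤ, U(λ) ≅ U(μ) as A_1-modules if and only if λ - μ ∈ ℤ. -/

import Mathlib

/-!
On `U(c)` the operator `∂x` is diagonal, `∂x · e_k = (c + k + 1) e_k`. An isomorphism
`U(λ) ≅ U(μ)` carries the eigenvector `e_0` (eigenvalue `λ + 1`) to a nonzero eigenvector
of `∂x` on `U(μ)`, so `λ + 1 = μ + k + 1` for some `k ∈ ℤ`. Conversely, if `λ = μ + n`,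
the shift `e_k ↦ e_{k+n}` is an isomorphism.
-/

/-- The operator `x`: `x · e_n = e_{n+1}` on `U(λ)`, basis `e_n ↔ x^{λ+n}`. -/
noncomputable def weylX : (ℤ →₀ ℂ) →ₗ[ℂ] (ℤ →₀ ℂ) :=
  Finsupp.lmapDomain ℂ ℂ (fun n => n + 1)

/-- The operator `∂`: `∂ · e_n = (λ + n) e_{n-1}`. -/
noncomputable def weylD (l : ℂ) : (ℤ →₀ ℂ) →ₗ[ℂ] (ℤ →₀ ℂ) :=
  Finsupp.lsum ℂ (fun n => (l + (n : ℂ)) • Finsupp.lsingle (n - 1))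

lemma weylX_single (n : ℤ) (a : ℂ) :
    weylX (Finsupp.single n a) = Finsupp.single (n + 1) a :=
  Finsupp.mapDomain_single

lemma weylD_single (c : ℂ) (n : ℤ) (a : ℂ) :
    weylD c (Finsupp.single n a) = (c + n) • Finsupp.single (n - 1) a := by
  simp only [weylD, Finsupp.lsum_single, LinearMap.smul_apply, Finsupp.lsingle_apply]

lemma weylX_apply_add_one (u : ℤ →₀ ℂ) (k : ℤ) : weylX u (k + 1) = u k :=
  Finsupp.mapDomain_apply (add_left_injective 1) u k

lemma weylD_apply (c : ℂ) (u : ℤ →₀ ℂ) (k : ℤ) :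
    weylD c u k = (c + (k + 1 : ℤ)) * u (k + 1) := by
  classical
  rw [weylD, Finsupp.lsum_apply, Finsupp.sum_apply, Finsupp.sum, Finset.sum_eq_single (k + 1)]
  · simp
  · intro n _ hn
    simp [Finsupp.single_eq_of_ne' (show n - 1 ≠ k by omega)]
  · intro h
    simp [Finsupp.notMem_support_iff.mp h]

lemma weylD_weylX_apply (c : ℂ) (u : ℤ →₀ ℂ) (k : ℤ) :
    weylD c (weylX u) k = (c + (k + 1 : ℤ)) * u k := by
  rw [weylD_apply, weylX_apply_add_one]

lemma exists_int_of_weylD_weylX_eq_smul {c a : ℂ} {w : ℤ →₀ ℂ} (hw : w ≠ 0)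
    (h : weylD c (weylX w) = a • w) : ∃ k : ℤ, a = c + (k + 1 : ℤ) := by
  obtain ⟨k, hk⟩ := Finsupp.ne_iff.mp hw
  refine ⟨k, mul_right_cancel₀ hk ?_⟩
  simpa [weylD_weylX_apply] using (DFunLike.congr_fun h k).symm

lemma exists_int_sub_eq_of_intertwining {l m : ℂ} (T : (ℤ →₀ ℂ) →ₗ[ℂ] (ℤ →₀ ℂ))
    (hT : Function.Injective T) (hX : ∀ v, T (weylX v) = weylX (T v))
    (hD : ∀ v, T (weylD l v) = weylD m (T v)) : ∃ n : ℤ, l - m = n := by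
  have he : weylD l (weylX (Finsupp.single 0 1)) = (l + 1) • Finsupp.single 0 1 := by
    simp [weylX_single, weylD_single]
  have hw : T (Finsupp.single 0 1) ≠ 0 :=
    (map_ne_zero_iff T hT).mpr (Finsupp.single_ne_zero.mpr one_ne_zero)
  obtain ⟨k, hk⟩ := exists_int_of_weylD_weylX_eq_smul hw (by rw [← hX, ← hD, he, map_smul])
  exact ⟨k, by push_cast at hk; linear_combination hk⟩

noncomputable def weylShift (n : ℤ) : (ℤ →₀ ℂ) ≃ₗ[ℂ] (ℤ →₀ ℂ) :=
  Finsupp.domLCongr (Equiv.addRight n)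

lemma weylShift_single (n k : ℤ) (a : ℂ) :
    weylShift n (Finsupp.single k a) = Finsupp.single (k + n) a :=
  Finsupp.domLCongr_single _ _ _

lemma weylShift_weylX (n : ℤ) (v : ℤ →₀ ℂ) :
    weylShift n (weylX v) = weylX (weylShift n v) := by
  refine LinearMap.congr_fun (Finsupp.lhom_ext (φ := (weylShift n).toLinearMap ∘ₗ weylX)
    (ψ := weylX ∘ₗ (weylShift n).toLinearMap) fun k a => ?_) v
  simp only [LinearMap.coe_comp, LinearEquiv.coe_coe, Function.comp_apply, weylX_single,
    weylShift_single, add_right_comm]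

lemma weylShift_weylD {l m : ℂ} {n : ℤ} (h : l = m + n) (v : ℤ →₀ ℂ) :
    weylShift n (weylD l v) = weylD m (weylShift n v) := by
  refine LinearMap.congr_fun (Finsupp.lhom_ext (φ := (weylShift n).toLinearMap ∘ₗ weylD l)
    (ψ := weylD m ∘ₗ (weylShift n).toLinearMap) fun k a => ?_) v
  simp only [LinearMap.coe_comp, LinearEquiv.coe_coe, Function.comp_apply, weylD_single,
    map_smul, weylShift_single, sub_add_eq_add_sub, h]
  push_cast
  ring_nf

theorem weyl_U_iso_iff_general (l m : ℂ) :
    (∃ T : (ℤ →₀ ℂ) ≃ₗ[ℂ] (ℤ →₀ ℂ),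
        (∀ v, T (weylX v) = weylX (T v)) ∧
        (∀ v, T (weylD l v) = weylD m (T v)))
      ↔ ∃ n : ℤ, l - m = (n : ℂ) := by
  constructor
  · rintro ⟨T, hX, hD⟩
    exact exists_int_sub_eq_of_intertwining T.toLinearMap T.injective hX hD
  · rintro ⟨n, hn⟩
    exact ⟨weylShift n, weylShift_weylX n, weylShift_weylD (by linear_combination hn)⟩

/-- For `λ, μ ∈ ℂ \ ℤ`, the modules `U(λ)` and `U(μ)` over the first Weyl
algebra are isomorphic (i.e. there is a linear bijection commuting with the
actions of `x` and `∂`) if and only if `λ - μ ∈ ℤ`. -/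
theorem weyl_U_iso_iff (l m : ℂ)
    (hl : ∀ n : ℤ, l ≠ (n : ℂ)) (hm : ∀ n : ℤ, m ≠ (n : ℂ)) :
    (∃ T : (ℤ →₀ ℂ) ≃ₗ[ℂ] (ℤ →₀ ℂ),
        (∀ v, T (weylX v) = weylX (T v)) ∧
        (∀ v, T (weylD l v) = weylD m (T v)))
      ↔ ∃ n : ℤ, l - m = (n : ℂ) :=
  weyl_U_iso_iff_general l m
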